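/- arXiv:1602.01545 — 3 statements merged into one kernel-verified Lean document; each statement's English description precedes it below -/
import Mathlib

section
/- Generalized MacWilliams identity for split weight enumerators: with B_{l,r} the split weight enumerator of C_DS and B^⊥_{i,j} that of C_DS^⊥, one has B_{l,r} = (1/4^n) Σ_{i=0}^{n} Σ_{j=0}^{m} B^⊥_{i,j} K_l(i; n, 4) K_r(j; m, 2), where K_t(x; N, q) = Σ_{s=0}^{t} (-1)^s (q-1)^{t-s} C(x,s) C(N-x, t-s) is the q-ary Krawtchouk polynomial. -/
open Finset

noncomputable section

abbrev F2 := ZMod 2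
abbrev F4 := GaloisField 2 2

/-- Trace from `F4` to `F2`. -/
def trF : F4 →ₗ[F2] F2 := Algebra.trace F2 F4

/-- Hamming weight of a vector. -/
def wt {α : Type*} [Zero α] {N : ℕ} (x : Fin N → α) : ℕ := Nat.card {i // x i ≠ 0}

/-- Hermitian trace inner product on `F4^n`. -/
def ipD {n : ℕ} (x y : Fin n → F4) : F2 := trF (∑ i, x i * (y i) ^ 2)

/-- Mixed inner product on `F4^n × F2^m`. -/
def ipDS {n m : ℕ} (x y : (Fin n → F4) × (Fin m → F2)) : F2 :=
  ipD x.1 y.1 + ∑ j, x.2 j * y.2 j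

/-- The F2-row space of `H` inside `F4^n`. -/
def rowSpanF2 {n m : ℕ} (H : Fin m → Fin n → F4) : Set (Fin n → F4) :=
  {v | ∃ u : Fin m → F2, v = fun i => ∑ r, algebraMap F2 F4 (u r) * H r i}

/-- The data-syndrome code generated by the rows of `[H | I_m]`. -/
def CDS {n m : ℕ} (H : Fin m → Fin n → F4) : Set ((Fin n → F4) × (Fin m → F2)) :=
  {w | ∃ u : Fin m → F2, w = (fun i => ∑ r, algebraMap F2 F4 (u r) * H r i, u)}

/-- Dual with respect to the mixed inner product. -/
def dualDS {n m : ℕ} (D : Set ((Fin n → F4) × (Fin m → F2))) :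
    Set ((Fin n → F4) × (Fin m → F2)) :=
  {v | ∀ w ∈ D, ipDS w v = 0}

/-- Split weight enumerator. -/
def Bwt {n m : ℕ} (D : Set ((Fin n → F4) × (Fin m → F2))) (i j : ℕ) : ℕ :=
  Nat.card {w : (Fin n → F4) × (Fin m → F2) // w ∈ D ∧ wt w.1 = i ∧ wt w.2 = j}

/-- q-ary Krawtchouk polynomial `K_t(x; N, q)` evaluated at integer `x`. -/
def kraw (t x N q : ℕ) : ℚ :=
  ∑ s ∈ Finset.range (t + 1),
    (-1 : ℚ) ^ s * ((q : ℚ) - 1) ^ (t - s) * (x.choose s) * ((N - x).choose (t - s))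

/-! Both Krawtchouk values are character sums. For a primitive additive character `ψ` of a
finite ring with `q` elements,
`∏ᵢ ∑ₜ ψ(t yᵢ) z^[t ≠ 0] = (1 - z)^wt(y) (1 + (q - 1) z)^(N - wt(y))`, so
`∑_{wt a = l} ψ(a ⬝ y) = K_l(wt y; N, q)`; we use the sign character `χ` of `F2` and `χ ∘ Tr`.
The dual code is the graph `{(x, s(x))}` of the syndrome map `s(x)_r = ⟨H_r, x⟩`, so the
right-hand side is `4⁻ⁿ ∑ₓ ∑_{wt a = l, wt b = r} χ(⟨(a, b), (x, s(x))⟩)`. As a function of `x`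
this character is `x ↦ χ(Tr((a + bH) ⬝ x̄))`, whose sum is `4ⁿ` if `a = bH`, i.e.
`(a, b) ∈ C_DS`, and `0` otherwise. -/

section Krawtchouk

open Polynomial

lemma wt_eq_card_filter {α : Type*} [Zero α] [DecidableEq α] {N : ℕ} (x : Fin N → α) :
    wt x = #{i | x i ≠ 0} := by
  rw [wt, Nat.card_eq_fintype_card, Fintype.card_subtype]

lemma wt_le {α : Type*} [Zero α] {N : ℕ} (x : Fin N → α) : wt x ≤ N := by
  classical
  simpa [wt_eq_card_filter] using card_filter_le (univ : Finset (Fin N)) _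

lemma wt_pow {M₀ : Type*} [MonoidWithZero M₀] [NoZeroDivisors M₀] {N k : ℕ} (hk : k ≠ 0)
    (x : Fin N → M₀) : wt (x ^ k) = wt x := by
  simp only [wt, Pi.pow_apply, ne_eq, pow_eq_zero_iff hk]

lemma coeff_one_add_C_mul_X_pow {R : Type*} [CommSemiring R] (r : R) (k s : ℕ) :
    ((1 + C r * X) ^ k).coeff s = r ^ s * k.choose s := by
  rw [add_comm, add_pow, finsetSum_coeff]
  simp only [one_pow, mul_one, mul_pow, ← C_pow, ← C_eq_natCast, coeff_mul_C, coeff_C_mul_X_pow]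
  rcases lt_or_ge k s with h | h
  · simp [Nat.choose_eq_zero_of_lt h, h.not_ge]
  · simp [Nat.lt_succ_of_le h]

lemma kraw_eq_coeff (t x N q : ℕ) :
    kraw t x N q = ((1 + C (-1 : ℚ) * X) ^ x * (1 + C ((q : ℚ) - 1) * X) ^ (N - x)).coeff t := by
  rw [coeff_mul, Nat.sum_antidiagonal_eq_sum_range_succ_mk, kraw]
  refine sum_congr rfl fun s _ => ?_
  rw [coeff_one_add_C_mul_X_pow, coeff_one_add_C_mul_X_pow]
  ring

lemma sum_ite_eq_wt {α : Type*} [Zero α] [DecidableEq α] {N : ℕ} (a : Fin N → α) :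
    ∑ i, (if a i = 0 then 0 else 1) = wt a := by
  simp [wt_eq_card_filter, card_filter, ite_not]

lemma coeff_prod_sum_C_mul_X_pow {α : Type*} [Fintype α] [Zero α] [DecidableEq α] {N : ℕ}
    (f : Fin N → α → ℚ) (l : ℕ) :
    (∏ i, ∑ t, C (f i t) * X ^ (if t = 0 then 0 else 1)).coeff l =
      ∑ a with wt a = l, ∏ i, f i (a i) := by
  simp_rw [Fintype.prod_sum, prod_mul_distrib, ← map_prod, prod_pow_eq_pow_sum, sum_ite_eq_wt,
    finsetSum_coeff, coeff_C_mul_X_pow, sum_filter, eq_comm]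

lemma sum_C_mul_X_pow_ite_eq {α : Type*} [Fintype α] [Zero α] [DecidableEq α] (f : α → ℚ) :
    ∑ t, C (f t) * X ^ (if t = 0 then 0 else 1) = C (f 0) + C (∑ t, f t - f 0) * X := by
  have hf : ∑ t, f t - f 0 = ∑ t ∈ univ.erase 0, f t := by
    rw [← add_sum_erase _ _ (mem_univ 0), add_sub_cancel_left]
  rw [hf, ← add_sum_erase _ _ (mem_univ 0), map_sum, sum_mul, if_pos rfl, pow_zero, mul_one]
  congr 1
  exact sum_congr rfl fun t ht => by rw [if_neg (ne_of_mem_erase ht), pow_one]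

end Krawtchouk

lemma AddChar.map_sum_eq_prod {ι A M : Type*} [AddCommMonoid A] [CommMonoid M]
    (ψ : AddChar A M) (s : Finset ι) (f : ι → A) : ψ (∑ i ∈ s, f i) = ∏ i ∈ s, ψ (f i) := by
  induction s using Finset.cons_induction with
  | empty => simp
  | cons a s ha ih => rw [sum_cons, prod_cons, AddChar.map_add_eq_mul, ih]

section PrimitiveCharacter

open Polynomial

variable {R : Type*} [CommRing R] [Fintype R] [DecidableEq R] {ψ : AddChar R ℚ}

lemma sum_dotProduct_eq_ite (hψ : ψ.IsPrimitive) {N : ℕ} (c : Fin N → R) :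
    ∑ x : Fin N → R, ψ (c ⬝ᵥ x) = if c = 0 then (Fintype.card R : ℚ) ^ N else 0 := by
  simp_rw [dotProduct, AddChar.map_sum_eq_prod]
  rw [← Fintype.prod_sum fun i t => ψ (c i * t)]
  simp_rw [mul_comm (c _), AddChar.sum_mulShift _ hψ]
  split_ifs with hc
  · simp [hc]
  · obtain ⟨i, hi⟩ := Function.ne_iff.mp hc
    exact prod_eq_zero (mem_univ i) (by simp [show c i ≠ 0 from hi])

lemma sum_wt_eq_kraw (hψ : ψ.IsPrimitive) {N : ℕ} (y : Fin N → R) (l : ℕ) :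
    ∑ a with wt a = l, ψ (a ⬝ᵥ y) = kraw l (wt y) N (Fintype.card R) := by
  have hfactor : ∀ i, ∑ t, C (ψ (t * y i)) * X ^ (if t = 0 then 0 else 1) =
      if y i = 0 then 1 + C ((Fintype.card R : ℚ) - 1) * X else 1 + C (-1 : ℚ) * X := by
    intro i
    rw [sum_C_mul_X_pow_ite_eq, AddChar.sum_mulShift _ hψ, zero_mul, AddChar.map_zero_eq_one,
      map_one]
    split_ifs <;> simp
  have hzeros : #{i | y i = 0} = N - wt y := by
    have := card_filter_add_card_filter_not (s := univ) fun i => y i = 0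
    rw [card_univ, Fintype.card_fin] at this
    rw [wt_eq_card_filter]
    simp only [ne_eq]
    omega
  simp_rw [dotProduct, AddChar.map_sum_eq_prod]
  rw [← coeff_prod_sum_C_mul_X_pow (fun i t => ψ (t * y i)), prod_congr rfl fun i _ => hfactor i,
    prod_ite, prod_const, prod_const, hzeros, kraw_eq_coeff, mul_comm, wt_eq_card_filter]

end PrimitiveCharacter

instance : Fintype F4 := Fintype.ofFinite _

lemma card_F4 : Fintype.card F4 = 4 := by
  rw [Fintype.card_eq_nat_card, GaloisField.card 2 2 two_ne_zero]
  norm_num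

lemma bijective_pow_two_F4 (n : ℕ) : Function.Bijective fun x : Fin n → F4 => x ^ 2 :=
  (Equiv.piCongrRight fun _ => (frobeniusEquiv F4 2).toEquiv).bijective

def chiF2 : AddChar F2 ℚ := AddChar.zmodChar 2 (ζ := (-1 : ℚ)) (by norm_num)

def chiF4 : AddChar F4 ℚ := chiF2.compAddMonoidHom trF.toAddMonoidHom

lemma chiF2_isPrimitive : chiF2.IsPrimitive := by
  refine AddChar.IsPrimitive.of_ne_one fun h => ?_
  have h1 : (-1 : ℚ) ^ 1 = 1 := DFunLike.congr_fun h 1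
  norm_num at h1

lemma chiF4_isPrimitive : chiF4.IsPrimitive := by
  refine AddChar.IsPrimitive.of_ne_one fun h => Algebra.trace_ne_zero F2 F4 ?_
  exact LinearMap.ext fun x =>
    (chiF2_isPrimitive.zmod_char_eq_one_iff 2 _).mp (DFunLike.congr_fun h x)

section DataSyndromeCode

open Matrix
open scoped Classical

variable {n m : ℕ}

lemma chiF2_ipD (x y : Fin n → F4) : chiF2 (ipD x y) = chiF4 (x ⬝ᵥ y ^ 2) := rfl

lemma ipDS_eq (w v : (Fin n → F4) × (Fin m → F2)) : ipDS w v = ipD w.1 v.1 + w.2 ⬝ᵥ v.2 := rfl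

def syndrome (H : Fin m → Fin n → F4) (x : Fin n → F4) : Fin m → F2 := fun r => ipD (H r) x

variable (H : Fin m → Fin n → F4)

lemma ipD_vecMul (u : Fin m → F2) (x : Fin n → F4) :
    ipD ((algebraMap F2 F4 ∘ u) ᵥ* of H) x = u ⬝ᵥ syndrome H x := by
  change trF (_ ⬝ᵥ x ^ 2) = _
  rw [← dotProduct_mulVec]
  simp only [dotProduct, map_sum, Function.comp_apply, ← Algebra.smul_def, map_smul, smul_eq_mul]
  rfl

lemma mem_CDS_iff (w : (Fin n → F4) × (Fin m → F2)) :
    w ∈ CDS H ↔ w.1 = (algebraMap F2 F4 ∘ w.2) ᵥ* of H :=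
  ⟨by rintro ⟨u, rfl⟩; rfl, fun h => ⟨w.2, Prod.ext h rfl⟩⟩

lemma mem_dualDS_CDS_iff (v : (Fin n → F4) × (Fin m → F2)) :
    v ∈ dualDS (CDS H) ↔ v.2 = syndrome H v.1 := by
  have hpair : ∀ u, ipDS ((algebraMap F2 F4 ∘ u) ᵥ* of H, u) v = (syndrome H v.1 + v.2) ⬝ᵥ u := by
    intro u
    rw [ipDS_eq, ipD_vecMul, ← dotProduct_add, dotProduct_comm]
  calc v ∈ dualDS (CDS H) ↔ ∀ u, ipDS ((algebraMap F2 F4 ∘ u) ᵥ* of H, u) v = 0 :=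
        ⟨fun h u => h _ ⟨u, rfl⟩, by rintro h _ ⟨u, rfl⟩; exact h u⟩
    _ ↔ syndrome H v.1 + v.2 = 0 := by simp_rw [hpair, dotProduct_eq_zero_iff]
    _ ↔ v.2 = syndrome H v.1 := by
        rw [@eq_comm _ v.2]
        simp only [funext_iff, Pi.add_apply, Pi.zero_apply, CharTwo.add_eq_zero]

def dualCDSEquiv : dualDS (CDS H) ≃ (Fin n → F4) where
  toFun v := v.1.1
  invFun x := ⟨(x, syndrome H x), (mem_dualDS_CDS_iff H _).2 rfl⟩
  left_inv v := Subtype.ext (Prod.ext rfl ((mem_dualDS_CDS_iff H _).1 v.2).symm)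
  right_inv _ := rfl

lemma chiF2_ipDS_syndrome (w : (Fin n → F4) × (Fin m → F2)) (x : Fin n → F4) :
    chiF2 (ipDS w (x, syndrome H x)) =
      chiF4 ((w.1 + (algebraMap F2 F4 ∘ w.2) ᵥ* of H) ⬝ᵥ x ^ 2) := by
  rw [add_dotProduct, AddChar.map_add_eq_mul, ipDS_eq, AddChar.map_add_eq_mul, ← ipD_vecMul]
  rfl

lemma sum_chiF2_ipDS_syndrome (w : (Fin n → F4) × (Fin m → F2)) :
    ∑ x, chiF2 (ipDS w (x, syndrome H x)) = if w ∈ CDS H then (4 : ℚ) ^ n else 0 := by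
  simp_rw [chiF2_ipDS_syndrome]
  rw [(bijective_pow_two_F4 n).sum_comp
      fun y => chiF4 ((w.1 + (algebraMap F2 F4 ∘ w.2) ᵥ* of H) ⬝ᵥ y),
    sum_dotProduct_eq_ite chiF4_isPrimitive, card_F4]
  simp only [mem_CDS_iff, funext_iff, Pi.add_apply, Pi.zero_apply, CharTwo.add_eq_zero]
  norm_num

lemma kraw_mul_kraw_syndrome (x : Fin n → F4) (l r : ℕ) :
    kraw l (wt x) n 4 * kraw r (wt (syndrome H x)) m 2 =
      ∑ a with wt a = l, ∑ b with wt b = r, chiF2 (ipDS (a, b) (x, syndrome H x)) := by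
  have hF4 := sum_wt_eq_kraw chiF4_isPrimitive (x ^ 2) l
  have hF2 := sum_wt_eq_kraw chiF2_isPrimitive (syndrome H x) r
  rw [card_F4, wt_pow two_ne_zero] at hF4
  rw [ZMod.card] at hF2
  rw [← hF4, ← hF2, sum_mul_sum]
  simp_rw [ipDS_eq, AddChar.map_add_eq_mul, chiF2_ipD]

end DataSyndromeCode

section SplitWeightEnumerator

open scoped Classical

variable {n m : ℕ}

lemma Bwt_eq_card_filter (D : Set ((Fin n → F4) × (Fin m → F2))) (i j : ℕ) :
    Bwt D i j = #{v : D | wt v.1.1 = i ∧ wt v.1.2 = j} := by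
  rw [Bwt, ← Nat.card_congr (Equiv.subtypeSubtypeEquivSubtypeInter (· ∈ D) _),
    Nat.card_eq_fintype_card, Fintype.card_subtype]

lemma sum_range_Bwt_mul (D : Set ((Fin n → F4) × (Fin m → F2))) (f : ℕ → ℕ → ℚ) :
    ∑ i ∈ range (n + 1), ∑ j ∈ range (m + 1), (Bwt D i j : ℚ) * f i j =
      ∑ v : D, f (wt v.1.1) (wt v.1.2) := by
  have hmaps : ∀ v ∈ (univ : Finset D), (wt v.1.1, wt v.1.2) ∈ range (n + 1) ×ˢ range (m + 1) :=
    fun v _ => by simp [wt_le]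
  rw [← sum_product' (f := fun i j => (Bwt D i j : ℚ) * f i j), ← sum_fiberwise_of_maps_to hmaps]
  refine sum_congr rfl fun ⟨i, j⟩ _ => ?_
  have hfiber : ∀ v ∈ ({v | (wt v.1.1, wt v.1.2) = (i, j)} : Finset D),
      f (wt v.1.1) (wt v.1.2) = f i j := fun v hv => by
    obtain ⟨hi, hj⟩ := Prod.mk.inj (mem_filter.1 hv).2
    rw [hi, hj]
  rw [sum_congr rfl hfiber, sum_const, nsmul_eq_mul, Bwt_eq_card_filter]
  simp only [Prod.mk.injEq]

lemma Bwt_eq_sum_sum_boole (D : Set ((Fin n → F4) × (Fin m → F2))) (l r : ℕ) :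
    (Bwt D l r : ℚ) = ∑ a with wt a = l, ∑ b with wt b = r, if (a, b) ∈ D then 1 else 0 := by
  rw [← sum_product' (f := fun a b => if (a, b) ∈ D then (1 : ℚ) else 0), ← filter_product,
    univ_product_univ, sum_boole, filter_filter, Bwt, Nat.card_eq_fintype_card,
    Fintype.card_subtype]
  simp only [and_comm]

end SplitWeightEnumerator

theorem stmt3_general (n k : ℕ) (H : Fin (n - k) → Fin n → F4) (l r : ℕ) :
    (Bwt (CDS H) l r : ℚ) =
      (1 / 4 ^ n) * ∑ i ∈ Finset.range (n + 1), ∑ j ∈ Finset.range (n - k + 1),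
        (Bwt (dualDS (CDS H)) i j : ℚ) * kraw l i n 4 * kraw r j (n - k) 2 := by
  classical
  have hdual : ∑ i ∈ range (n + 1), ∑ j ∈ range (n - k + 1),
      (Bwt (dualDS (CDS H)) i j : ℚ) * kraw l i n 4 * kraw r j (n - k) 2 =
        4 ^ n * Bwt (CDS H) l r :=
    calc _ = ∑ x, kraw l (wt x) n 4 * kraw r (wt (syndrome H x)) (n - k) 2 := by
          simp_rw [mul_assoc]
          rw [sum_range_Bwt_mul]
          exact ((dualCDSEquiv H).symm.sum_comp _).symm
      _ = ∑ a with wt a = l, ∑ b with wt b = r, ∑ x, chiF2 (ipDS (a, b) (x, syndrome H x)) := by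
          simp_rw [kraw_mul_kraw_syndrome]
          rw [sum_comm]
          exact sum_congr rfl fun _ _ => sum_comm
      _ = 4 ^ n * Bwt (CDS H) l r := by
          simp_rw [sum_chiF2_ipDS_syndrome, ← mul_boole (a := (4 : ℚ) ^ n), ← mul_sum,
            Bwt_eq_sum_sum_boole]
  rw [hdual]
  field_simp

/-- generalized MacWilliams identity for split weight enumerators. -/
theorem stmt3 (n k : ℕ) (hk : k ≤ n) (H : Fin (n - k) → Fin n → F4)
    (hind : LinearIndependent F2 H)
    (horth : ∀ r s, ipD (H r) (H s) = 0)
    (l r : ℕ) (hl : l ≤ n) (hr : r ≤ n - k) :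
    (Bwt (CDS H) l r : ℚ) =
      (1 / 4 ^ n) * ∑ i ∈ Finset.range (n + 1), ∑ j ∈ Finset.range (n - k + 1),
        (Bwt (dualDS (CDS H)) i j : ℚ) * kraw l i n 4 * kraw r j (n - k) 2 :=
  stmt3_general n k H l r
end
end

section
/- Generalized linear-programming bound for unrestricted DS codes: let f(x,y) = Σ_{i,j} f_{i,j} K_i(x;n,4) K_j(y;m,2) be any polynomial with all Krawtchouk coefficients f_{i,j} ≥ 0, f_{0,0} > 0, satisfying f(l,0) ≤ 0 for all integers l with d_D ≤ l ≤ n and f(l,r) ≤ 0 for all (l,r) ∈ \bar{A}, where A ⊆ {(i,j) : 0 ≤ i ≤ n, 1 ≤ j ≤ m} and \bar{A} is its complement in that set. If the split weight enumerators of a DS code satisfy B^⊥_{i,0} = Σ_{j=0}^{m} B_{i,j} for i = 0,…,d_D - 1 and B^⊥_{i,j} = 0 for (i,j) ∈ A, and additionally min_{1≤j≤m} f_{l,j} > 0 for 1 ≤ l ≤ d_D - 1, then max{ f(0,0)/f_{0,0}, max_{1≤l≤d_D-1} f(l,0) / (min_{1≤j≤m} f_{l,j}) } ≥ 2^{2n}.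 -/
open Finset

noncomputable section

lemma range_succ_eq_insert (k : ℕ) :
    Finset.range (k + 1) = insert 0 (Finset.Icc 1 k) := by
  ext x
  simp only [Finset.mem_range, Finset.mem_insert, Finset.mem_Icc]
  omega

lemma sum_range_succ_peel (k : ℕ) (h : ℕ → ℚ) :
    ∑ j ∈ Finset.range (k + 1), h j = h 0 + ∑ j ∈ Finset.Icc 1 k, h j := by
  rw [range_succ_eq_insert, Finset.sum_insert (by simp)]

lemma sum_swap4 (a b : ℕ) (g : ℕ → ℕ → ℕ → ℕ → ℚ) :
    ∑ i ∈ Finset.range a, ∑ j ∈ Finset.range b, ∑ l ∈ Finset.range a,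
      ∑ r ∈ Finset.range b, g i j l r
    = ∑ l ∈ Finset.range a, ∑ r ∈ Finset.range b, ∑ i ∈ Finset.range a,
      ∑ j ∈ Finset.range b, g i j l r := by
  calc ∑ i ∈ Finset.range a, ∑ j ∈ Finset.range b, ∑ l ∈ Finset.range a,
      ∑ r ∈ Finset.range b, g i j l r
      = ∑ i ∈ Finset.range a, ∑ l ∈ Finset.range a, ∑ j ∈ Finset.range b,
          ∑ r ∈ Finset.range b, g i j l r :=
        Finset.sum_congr rfl fun i _ => Finset.sum_comm
    _ = ∑ l ∈ Finset.range a, ∑ i ∈ Finset.range a, ∑ j ∈ Finset.range b,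
          ∑ r ∈ Finset.range b, g i j l r := Finset.sum_comm
    _ = ∑ l ∈ Finset.range a, ∑ i ∈ Finset.range a, ∑ r ∈ Finset.range b,
          ∑ j ∈ Finset.range b, g i j l r :=
        Finset.sum_congr rfl fun l _ => Finset.sum_congr rfl fun i _ =>
          Finset.sum_comm
    _ = ∑ l ∈ Finset.range a, ∑ r ∈ Finset.range b, ∑ i ∈ Finset.range a,
          ∑ j ∈ Finset.range b, g i j l r :=
        Finset.sum_congr rfl fun l _ => Finset.sum_comm

/-- generalized linear-programming bound for unrestricted DS codes. -/
theorem stmt6 (n m dD : ℕ) (hm : 1 ≤ m) (hdD : 1 ≤ dD)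
    (A : Finset (ℕ × ℕ)) (hA : ∀ p ∈ A, p.1 ≤ n ∧ 1 ≤ p.2 ∧ p.2 ≤ m)
    (fc : ℕ → ℕ → ℚ)
    (f : ℕ → ℕ → ℚ)
    (hf : ∀ x y, f x y = ∑ i ∈ Finset.range (n + 1), ∑ j ∈ Finset.range (m + 1),
        fc i j * kraw i x n 4 * kraw j y m 2)
    (hfc_nonneg : ∀ i j, 0 ≤ fc i j)
    (hfc00 : 0 < fc 0 0)
    (hfcpos : ∀ l, 1 ≤ l → l ≤ dD - 1 → ∀ j, 1 ≤ j → j ≤ m → 0 < fc l j)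
    (hf1 : ∀ l, dD ≤ l → l ≤ n → f l 0 ≤ 0)
    (hf2 : ∀ i j, i ≤ n → 1 ≤ j → j ≤ m → (i, j) ∉ A → f i j ≤ 0)
    (B Bp : ℕ → ℕ → ℚ)
    (hB_nonneg : ∀ i j, 0 ≤ B i j) (hBp_nonneg : ∀ i j, 0 ≤ Bp i j)
    (hMacW : ∀ l ≤ n, ∀ r ≤ m, B l r =
      (1 / 4 ^ n) * ∑ i ∈ Finset.range (n + 1), ∑ j ∈ Finset.range (m + 1),
        Bp i j * kraw l i n 4 * kraw r j m 2)
    (hB00 : B 0 0 = 1) (hBp00 : Bp 0 0 = 1)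
    (hBi0 : ∀ i, 1 ≤ i → B i 0 = 0)
    (hdeg : ∀ i, dD ≤ i → i ≤ n → (∑ j ∈ Finset.Icc 1 m, B i j) ≤ Bp i 0)
    (hcond1 : ∀ i, i ≤ dD - 1 → Bp i 0 = ∑ j ∈ Finset.range (m + 1), B i j)
    (hcond2 : ∀ p ∈ A, Bp p.1 p.2 = 0) :
    (2 : ℚ) ^ (2 * n) ≤ f 0 0 / fc 0 0 ∨
    ∃ l, 1 ≤ l ∧ l ≤ dD - 1 ∧
      (2 : ℚ) ^ (2 * n) ≤ f l 0 /
        ((Finset.Icc 1 m).inf' (Finset.nonempty_Icc.mpr hm) (fun j => fc l j)) := by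

  by_contra hcon
  push_neg at hcon
  obtain ⟨h1, h2⟩ := hcon
  have hQ4 : (2 : ℚ) ^ (2 * n) = (4 : ℚ) ^ n := by
    rw [pow_mul]; norm_num
  set Q : ℚ := (2 : ℚ) ^ (2 * n) with hQdef
  have hQpos : 0 < Q := by positivity
  have h1' : f 0 0 < Q * fc 0 0 := by
    rw [div_lt_iff₀ hfc00] at h1
    linarith
  set μ : ℕ → ℚ := fun l =>
    (Finset.Icc 1 m).inf' (Finset.nonempty_Icc.mpr hm) (fun j => fc l j) with hμdef
  have hμpos : ∀ l, 1 ≤ l → l ≤ dD - 1 → 0 < μ l := by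
    intro l ha hb
    refine (Finset.lt_inf'_iff _).mpr fun j hj => ?_
    exact hfcpos l ha hb j (Finset.mem_Icc.mp hj).1 (Finset.mem_Icc.mp hj).2
  have hμle : ∀ l j, j ∈ Finset.Icc 1 m → μ l ≤ fc l j := fun l j hj =>
    Finset.inf'_le _ hj
  have h2' : ∀ l, 1 ≤ l → l ≤ dD - 1 → f l 0 < Q * μ l := by
    intro l ha hb
    have h := h2 l ha hb
    rw [div_lt_iff₀ (hμpos l ha hb)] at h
    linarith
  set E : ℕ → ℚ := fun i => ∑ j ∈ Finset.Icc 1 m, B i j with hEdef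
  have hE_nonneg : ∀ i, 0 ≤ E i := fun i =>
    Finset.sum_nonneg fun j _ => hB_nonneg i j
  set T : ℚ := ∑ i ∈ Finset.range (n + 1), ∑ j ∈ Finset.range (m + 1),
    Bp i j * f i j with hTdef
  set R : ℚ := ∑ l ∈ Finset.range (n + 1), ∑ r ∈ Finset.range (m + 1),
    fc l r * B l r with hRdef
  -- Key identity: T = 4^n * R
  have hTR : T = (4 : ℚ) ^ n * R := by
    have h4 : ((4 : ℚ) ^ n) ≠ 0 := by positivity
    have hT : T = ∑ i ∈ Finset.range (n + 1), ∑ j ∈ Finset.range (m + 1),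
        ∑ l ∈ Finset.range (n + 1), ∑ r ∈ Finset.range (m + 1),
          Bp i j * (fc l r * kraw l i n 4 * kraw r j m 2) := by
      rw [hTdef]
      refine Finset.sum_congr rfl fun i _ => Finset.sum_congr rfl fun j _ => ?_
      rw [hf i j, Finset.mul_sum]
      exact Finset.sum_congr rfl fun l _ => by rw [Finset.mul_sum]
    have hR : (4 : ℚ) ^ n * R = ∑ l ∈ Finset.range (n + 1),
        ∑ r ∈ Finset.range (m + 1), ∑ i ∈ Finset.range (n + 1),
          ∑ j ∈ Finset.range (m + 1),
            Bp i j * (fc l r * kraw l i n 4 * kraw r j m 2) := by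
      rw [hRdef, Finset.mul_sum]
      refine Finset.sum_congr rfl fun l hl => ?_
      rw [Finset.mul_sum]
      refine Finset.sum_congr rfl fun r hr => ?_
      have hln : l ≤ n := Nat.lt_succ_iff.mp (Finset.mem_range.mp hl)
      have hrm : r ≤ m := Nat.lt_succ_iff.mp (Finset.mem_range.mp hr)
      rw [hMacW l hln r hrm]
      have hc : (4 : ℚ) ^ n * (fc l r * ((1 / 4 ^ n) *
          ∑ i ∈ Finset.range (n + 1), ∑ j ∈ Finset.range (m + 1),
            Bp i j * kraw l i n 4 * kraw r j m 2)) =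
          fc l r * ∑ i ∈ Finset.range (n + 1), ∑ j ∈ Finset.range (m + 1),
            Bp i j * kraw l i n 4 * kraw r j m 2 := by
        field_simp
      rw [hc, Finset.mul_sum]
      refine Finset.sum_congr rfl fun i _ => ?_
      rw [Finset.mul_sum]
      exact Finset.sum_congr rfl fun j _ => by ring
    rw [hT, hR, sum_swap4]
  -- Upper bound on T
  have hTle : T ≤ f 0 0 + ∑ i ∈ Finset.Icc 1 n,
      (if i ≤ dD - 1 then E i * f i 0 else 0) := by
    have step1 : T ≤ ∑ i ∈ Finset.range (n + 1), Bp i 0 * f i 0 := by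
      rw [hTdef]
      refine Finset.sum_le_sum fun i hi => ?_
      have hin : i ≤ n := Nat.lt_succ_iff.mp (Finset.mem_range.mp hi)
      rw [sum_range_succ_peel m (fun j => Bp i j * f i j)]
      have : ∑ j ∈ Finset.Icc 1 m, Bp i j * f i j ≤ 0 := by
        refine Finset.sum_nonpos fun j hj => ?_
        obtain ⟨hj1, hj2⟩ := Finset.mem_Icc.mp hj
        by_cases hAij : (i, j) ∈ A
        · have := hcond2 (i, j) hAij
          simp only at this
          rw [this, zero_mul]
        · exact mul_nonpos_of_nonneg_of_nonpos (hBp_nonneg i j)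
            (hf2 i j hin hj1 hj2 hAij)
      linarith
    have step2 : ∑ i ∈ Finset.range (n + 1), Bp i 0 * f i 0 ≤
        f 0 0 + ∑ i ∈ Finset.Icc 1 n, (if i ≤ dD - 1 then E i * f i 0 else 0) := by
      rw [sum_range_succ_peel n (fun i => Bp i 0 * f i 0), hBp00, one_mul]
      gcongr with i hi
      obtain ⟨hi1, hin⟩ := Finset.mem_Icc.mp hi
      by_cases hle : i ≤ dD - 1
      · rw [if_pos hle]
        have hB0 : Bp i 0 = E i := by
          rw [hcond1 i hle, sum_range_succ_peel m (fun j => B i j),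
            hBi0 i hi1, zero_add]
        rw [hB0]
      · rw [if_neg hle]
        have hdDi : dD ≤ i := by omega
        exact mul_nonpos_of_nonneg_of_nonpos (hBp_nonneg i 0) (hf1 i hdDi hin)
    linarith
  -- Lower bound on R
  have hRge : fc 0 0 + ∑ i ∈ Finset.Icc 1 n,
      (if i ≤ dD - 1 then μ i * E i else 0) ≤ R := by
    rw [hRdef, sum_range_succ_peel n
      (fun l => ∑ r ∈ Finset.range (m + 1), fc l r * B l r)]
    have hz : fc 0 0 ≤ ∑ r ∈ Finset.range (m + 1), fc 0 r * B 0 r := by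
      rw [sum_range_succ_peel m (fun r => fc 0 r * B 0 r), hB00, mul_one]
      have : (0:ℚ) ≤ ∑ r ∈ Finset.Icc 1 m, fc 0 r * B 0 r :=
        Finset.sum_nonneg fun r _ => mul_nonneg (hfc_nonneg 0 r) (hB_nonneg 0 r)
      linarith
    have hs : ∑ i ∈ Finset.Icc 1 n, (if i ≤ dD - 1 then μ i * E i else 0) ≤
        ∑ i ∈ Finset.Icc 1 n, ∑ r ∈ Finset.range (m + 1), fc i r * B i r := by
      refine Finset.sum_le_sum fun i hi => ?_
      obtain ⟨hi1, hin⟩ := Finset.mem_Icc.mp hi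
      have hnn0 : (0:ℚ) ≤ fc i 0 * B i 0 :=
        mul_nonneg (hfc_nonneg i 0) (hB_nonneg i 0)
      rw [sum_range_succ_peel m (fun r => fc i r * B i r)]
      by_cases hle : i ≤ dD - 1
      · rw [if_pos hle]
        have : μ i * E i ≤ ∑ r ∈ Finset.Icc 1 m, fc i r * B i r := by
          rw [hEdef]
          simp only
          rw [Finset.mul_sum]
          refine Finset.sum_le_sum fun r hr => ?_
          exact mul_le_mul_of_nonneg_right (hμle i r hr) (hB_nonneg i r)
        linarith
      · rw [if_neg hle]
        have : (0:ℚ) ≤ ∑ r ∈ Finset.Icc 1 m, fc i r * B i r :=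
          Finset.sum_nonneg fun r _ =>
            mul_nonneg (hfc_nonneg i r) (hB_nonneg i r)
        linarith
    linarith
  -- Compare the two bounds
  have hYX : ∑ i ∈ Finset.Icc 1 n, (if i ≤ dD - 1 then E i * f i 0 else 0) ≤
      Q * ∑ i ∈ Finset.Icc 1 n, (if i ≤ dD - 1 then μ i * E i else 0) := by
    rw [Finset.mul_sum]
    refine Finset.sum_le_sum fun i hi => ?_
    obtain ⟨hi1, _⟩ := Finset.mem_Icc.mp hi
    by_cases hle : i ≤ dD - 1
    · rw [if_pos hle, if_pos hle]
      have := h2' i hi1 hle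
      calc E i * f i 0 ≤ E i * (Q * μ i) :=
            mul_le_mul_of_nonneg_left (le_of_lt this) (hE_nonneg i)
        _ = Q * (μ i * E i) := by ring
    · rw [if_neg hle, if_neg hle, mul_zero]
  have hQR : Q * (fc 0 0 + ∑ i ∈ Finset.Icc 1 n,
      (if i ≤ dD - 1 then μ i * E i else 0)) ≤ Q * R :=
    mul_le_mul_of_nonneg_left hRge (le_of_lt hQpos)
  have hQT : Q * R = T := by rw [hQ4]; exact hTR.symm
  have hexp : Q * (fc 0 0 + ∑ i ∈ Finset.Icc 1 n,
      (if i ≤ dD - 1 then μ i * E i else 0)) =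
      Q * fc 0 0 + Q * ∑ i ∈ Finset.Icc 1 n,
        (if i ≤ dD - 1 then μ i * E i else 0) := mul_add _ _ _
  linarith
end
end

section
/- The set S_{n,k} of F_2-linear codes of the DS form (generated by [H|I_{n-k}] with H ∈ F_4^{(n-k)×n} self-orthogonal of full rank under the Hermitian trace inner product) has cardinality |S_{n,k}| = Π_{r=0}^{n-k-1} (2^{2(n-r)} - 1)(2^{n-k} - 2^r) / (2^{r+1} - 1). -/
open Finset

noncomputable section

/-- The ensemble `S_{n,k}` of DS codes. -/
def SDS (n k : ℕ) : Set (Set ((Fin n → F4) × (Fin (n - k) → F2))) :=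
  {D | ∃ H : Fin (n - k) → Fin n → F4,
    LinearIndependent F2 H ∧ (∀ r s, ipD (H r) (H s) = 0) ∧ D = CDS H}

/-- The ensemble `S^⊥_{n,k}` of duals of DS codes. -/
def SDSperp (n k : ℕ) : Set (Set ((Fin n → F4) × (Fin (n - k) → F2))) :=
  {D' | ∃ D ∈ SDS n k, D' = dualDS D}

/-! The `F2`-bilinear form `ipD x y = Tr (∑ xᵢ yᵢ²)` on `F4ⁿ` is alternating (each `xᵢ³`
lies in `F2`, where the trace vanishes) and nondegenerate. The map `H ↦ CDS H` is injective
(the rows of `H` are the codewords with unit syndrome part), so `S_{n,k}` is in bijection with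
the ordered bases of `m = n - k`-dimensional totally isotropic subspaces. Such a basis is built
one vector at a time: once `r` vectors spanning `W` are chosen, the next one ranges over
`W^⊥ \ W`, which has `2^(2n-r) - 2^r` elements. Finally `2^(2n-r) - 2^r = 2^r (2^(2(n-r)) - 1)`,
and `∏_{r<m} (2^m - 2^r) = ∏_{r<m} 2^r (2^(r+1) - 1)` turns the product into the stated
formula. -/

open LinearMap (BilinForm)

namespace LinearMap.BilinForm

open Module Submodule

variable {K V : Type*} [Field K] [AddCommGroup V] [Module K V]

def isotropicFrames (B : BilinForm K V) (m : ℕ) : Set (Fin m → V) :=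
  {H | LinearIndependent K H ∧ ∀ r s, B (H r) (H s) = 0}

lemma mem_orthogonal_span_range_iff {B : BilinForm K V} {m : ℕ} {H : Fin m → V} {v : V} :
    v ∈ B.orthogonal (span K (Set.range H)) ↔ ∀ i, B (H i) v = 0 := by
  refine ⟨fun h i => h _ (subset_span ⟨i, rfl⟩), fun h => ?_⟩
  suffices span K (Set.range H) ≤ LinearMap.ker (B.flip v) from fun w hw => this hw
  rw [span_le]
  rintro _ ⟨i, rfl⟩
  exact h i

lemma snoc_mem_isotropicFrames_iff {B : BilinForm K V} (hB : B.IsAlt) {m : ℕ}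
    {H : Fin m → V} {v : V} :
    Fin.snoc H v ∈ B.isotropicFrames (m + 1) ↔ H ∈ B.isotropicFrames m ∧
      v ∈ (B.orthogonal (span K (Set.range H)) : Set V) \ span K (Set.range H) := by
  simp only [isotropicFrames, Set.mem_ofPred_eq, Set.mem_sdiff, SetLike.mem_coe,
    linearIndependent_finSnoc, mem_orthogonal_span_range_iff, Fin.forall_fin_succ',
    Fin.snoc_castSucc, Fin.snoc_last, hB.self_eq_zero, hB.isRefl.eq_iff (x := v), forall_and,
    and_true]
  tauto

variable [Finite K] [FiniteDimensional K V]

lemma natCard_orthogonal_sdiff {B : BilinForm K V} (hB : B.Nondegenerate) {W : Submodule K V}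
    (hW : W ≤ B.orthogonal W) :
    Nat.card ↥((B.orthogonal W : Set V) \ W) =
      Nat.card K ^ (finrank K V - finrank K W) - Nat.card K ^ finrank K W := by
  have : Finite V := Module.finite_iff_finite.mp ‹_›
  rw [Nat.card_coe_set_eq, Set.ncard_sdiff hW, ← Nat.card_coe_set_eq, ← Nat.card_coe_set_eq,
    SetLike.coe_sort_coe, SetLike.coe_sort_coe, natCard_eq_pow_finrank (K := K) (V := W),
    natCard_eq_pow_finrank (K := K) (V := B.orthogonal W), finrank_orthogonal hB]

lemma natCard_isotropicFrames_succ {B : BilinForm K V} (hB : B.Nondegenerate) (hA : B.IsAlt)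
    (m : ℕ) : Nat.card (B.isotropicFrames (m + 1)) =
      Nat.card (B.isotropicFrames m) * (Nat.card K ^ (finrank K V - m) - Nat.card K ^ m) := by
  let extensions (H : B.isotropicFrames m) : Set V :=
    (B.orthogonal (span K (Set.range H.1)) : Set V) \ span K (Set.range H.1)
  have hsnoc : Function.Bijective fun p : Σ H, extensions H =>
      (⟨Fin.snoc p.1.1 p.2.1, (snoc_mem_isotropicFrames_iff hA).2 ⟨p.1.2, p.2.2⟩⟩ :
        B.isotropicFrames (m + 1)) := by
    refine ⟨fun ⟨⟨H, _⟩, ⟨v, _⟩⟩ ⟨⟨H', _⟩, ⟨v', _⟩⟩ h => ?_, fun ⟨H, hH⟩ => ?_⟩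
    · have h' : (Fin.snoc H v : Fin (m + 1) → V) = Fin.snoc H' v' := congrArg Subtype.val h
      obtain ⟨rfl, rfl⟩ := Fin.snoc_injective2 h'
      rfl
    · rw [← Fin.snoc_init_self H, snoc_mem_isotropicFrames_iff hA] at hH
      exact ⟨⟨⟨_, hH.1⟩, ⟨_, hH.2⟩⟩, Subtype.ext (Fin.snoc_init_self H)⟩
  have hcard (H : B.isotropicFrames m) :
      Nat.card (extensions H) = Nat.card K ^ (finrank K V - m) - Nat.card K ^ m := by
    obtain ⟨H, hli, horth⟩ := H
    have hW : span K (Set.range H) ≤ B.orthogonal (span K (Set.range H)) := by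
      rw [span_le]
      rintro _ ⟨i, rfl⟩
      exact mem_orthogonal_span_range_iff.2 fun j => horth j i
    rw [natCard_orthogonal_sdiff hB hW, finrank_span_eq_card hli, Fintype.card_fin]
  have : Finite V := Module.finite_iff_finite.mp ‹_›
  have := Fintype.ofFinite (B.isotropicFrames m)
  rw [← Nat.card_eq_of_bijective _ hsnoc, Nat.card_sigma,
    Finset.sum_congr rfl fun H _ => hcard H, Finset.sum_const, Finset.card_univ,
    ← Nat.card_eq_fintype_card, smul_eq_mul]

theorem natCard_isotropicFrames {B : BilinForm K V} (hB : B.Nondegenerate) (hA : B.IsAlt)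
    (m : ℕ) : Nat.card (B.isotropicFrames m) =
      ∏ r ∈ Finset.range m, (Nat.card K ^ (finrank K V - r) - Nat.card K ^ r) := by
  induction m with
  | zero => simp [isotropicFrames]
  | succ m ih => rw [natCard_isotropicFrames_succ hB hA, ih, Finset.prod_range_succ]

end LinearMap.BilinForm

lemma pow_three_eq_one_F4 {a : F4} (ha : a ≠ 0) : a ^ 3 = 1 := by
  have := Fintype.ofFinite F4
  have hcard : Fintype.card F4 = 4 := by
    rw [← Nat.card_eq_fintype_card, GaloisField.card 2 2 two_ne_zero]; rfl
  simpa [hcard] using FiniteField.pow_card_sub_one_eq_one a ha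

lemma finrank_F4 : Module.finrank F2 F4 = 2 := GaloisField.finrank 2 two_ne_zero

lemma trF_algebraMap (c : F2) : trF (algebraMap F2 F4 c) = 0 := by
  rw [trF, Algebra.trace_algebraMap, finrank_F4, two_smul, CharTwo.add_self_eq_zero]

def ipForm (n : ℕ) : BilinForm F2 (Fin n → F4) :=
  LinearMap.mk₂ F2 ipD
    (fun x x' y => by simp only [ipD, Pi.add_apply, add_mul, sum_add_distrib, map_add])
    (fun c x y => by simp only [ipD, Pi.smul_apply, smul_mul_assoc, ← smul_sum, map_smul])
    (fun x y y' => by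
      simp only [ipD, Pi.add_apply, add_pow_char, mul_add, sum_add_distrib, map_add])
    (fun c x y => by
      simp only [ipD, Pi.smul_apply, smul_pow, ZMod.pow_card, mul_smul_comm, ← smul_sum, map_smul])

lemma ipForm_apply {n : ℕ} (x y : Fin n → F4) : ipForm n x y = ipD x y := rfl

lemma ipForm_isAlt (n : ℕ) : (ipForm n).IsAlt := by
  intro x
  have hcube (a : F4) : a * a ^ 2 ∈ (⊥ : Subalgebra F2 F4) := by
    rcases eq_or_ne a 0 with rfl | ha
    · simp
    · rw [← pow_succ', pow_three_eq_one_F4 ha]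
      exact one_mem _
  obtain ⟨c, hc⟩ := Algebra.mem_bot.1 (Subalgebra.sum_mem _ fun i _ => hcube (x i))
  rw [ipForm_apply, ipD, ← hc, trF_algebraMap]

lemma ipForm_nondegenerate (n : ℕ) : (ipForm n).Nondegenerate := by
  refine (ipForm_isAlt n).isRefl.nondegenerate_iff_separatingRight.2 fun y hy =>
    funext fun i => ?_
  have hsq : y i ^ 2 = 0 := (traceForm_nondegenerate F2 F4).2 _ fun a => by
    simpa [ipForm_apply, ipD, trF, Pi.single_apply] using hy (Pi.single i a)
  exact pow_eq_zero_iff two_ne_zero |>.1 hsq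

lemma finrank_F4_pi (n : ℕ) : Module.finrank F2 (Fin n → F4) = 2 * n := by
  rw [Module.finrank_pi_fintype]
  simp [finrank_F4, mul_comm]

lemma CDS_injective {n m : ℕ} : Function.Injective (CDS : (Fin m → Fin n → F4) → _) := by
  intro H H' h
  funext r
  have hrow (G : Fin m → Fin n → F4) :
      (fun i => ∑ s, algebraMap F2 F4 ((Pi.single r 1 : Fin m → F2) s) * G s i) = G r := by
    funext i
    simp [Pi.single_apply]
  obtain ⟨u, hu⟩ : (H r, Pi.single r 1) ∈ CDS H' := h ▸ ⟨Pi.single r 1, by rw [hrow]⟩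
  obtain ⟨hfst, rfl⟩ := Prod.ext_iff.1 hu
  exact hfst.trans (hrow H')

lemma SDS_eq_image (n k : ℕ) : SDS n k = CDS '' (ipForm n).isotropicFrames (n - k) := by
  ext D
  simp [SDS, LinearMap.BilinForm.isotropicFrames, ipForm_apply, eq_comm, and_assoc]

lemma prod_range_pow_sub_pow {R : Type*} [CommRing R] (q : R) (m : ℕ) :
    ∏ r ∈ range m, (q ^ m - q ^ r) = ∏ r ∈ range m, q ^ r * (q ^ (r + 1) - 1) := by
  rw [prod_mul_distrib, ← prod_range_reflect (fun r => q ^ (r + 1) - 1), ← prod_mul_distrib]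
  refine prod_congr rfl fun r hr => ?_
  rw [mem_range] at hr
  rw [show m - 1 - r + 1 = m - r by omega, mul_sub_one, ← pow_add, Nat.add_sub_cancel' hr.le]

theorem stmt11_general (n k : ℕ) :
    (Nat.card (SDS n k) : ℚ) =
      ∏ r ∈ Finset.range (n - k),
        ((2 : ℚ) ^ (2 * (n - r)) - 1) * ((2 : ℚ) ^ (n - k) - 2 ^ r) /
          ((2 : ℚ) ^ (r + 1) - 1) := by
  have hC : ∏ r ∈ range (n - k), ((2 : ℚ) ^ (r + 1) - 1) ≠ 0 :=
    prod_ne_zero_iff.2 fun r _ => sub_ne_zero.2 (one_lt_pow₀ one_lt_two r.succ_ne_zero).ne'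
  rw [SDS_eq_image, Nat.card_image_of_injective CDS_injective,
    LinearMap.BilinForm.natCard_isotropicFrames (ipForm_nondegenerate n) (ipForm_isAlt n),
    finrank_F4_pi, Nat.card_zmod, prod_div_distrib, prod_mul_distrib, prod_range_pow_sub_pow,
    prod_mul_distrib, mul_div_assoc, mul_div_cancel_right₀ _ hC, ← prod_mul_distrib,
    Nat.cast_prod]
  refine prod_congr rfl fun r hr => ?_
  have hrn : r < n := (mem_range.1 hr).trans_le (Nat.sub_le n k)
  rw [Nat.cast_sub (Nat.pow_le_pow_right two_pos (by omega)),
    show 2 * n - r = 2 * (n - r) + r by omega]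
  push_cast
  ring

/-- cardinality of the ensemble of DS codes. -/
theorem stmt11 (n k : ℕ) (hk : k ≤ n) :
    (Nat.card (SDS n k) : ℚ) =
      ∏ r ∈ Finset.range (n - k),
        ((2 : ℚ) ^ (2 * (n - r)) - 1) * ((2 : ℚ) ^ (n - k) - 2 ^ r) /
          ((2 : ℚ) ^ (r + 1) - 1) :=
  stmt11_general n k
end
end
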